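/- The factorization identity holds: (D³ + W D + Υ)(D³ − D∘W + Υ) = ∂_x³ + U ∂_x + Φ D + (1/2)(U_x − (DΦ)), where U = −2W_x − W² + (DΥ) and Φ = −Υ_x − 2ΥW. -/

import Mathlib

/-!
Push the superderivative `D` to the right through each coefficient of the second factor with the
graded Leibniz rule `D f = (D f) + (-1)^{|f|} f D` (three times for `D³ f`). After expanding the
product, the terms in `D³` and `D⁴` cancel, and the rest collects into the right-hand side once one
uses `Υ² = 0` (`Υ` is odd) and that the even fields `W`, `DΥ` commute with everything.
-/

section SuperLeibniz

variable {A : Type*} [Ring A] {d f f₁ f₂ f₃ : A}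

theorem pow_three_mul_of_even (h₀ : d * f = f₁ + f * d) (h₁ : d * f₁ = f₂ - f₁ * d)
    (h₂ : d * f₂ = f₃ + f₂ * d) : d ^ 3 * f = f₃ + f₂ * d + f₁ * d ^ 2 + f * d ^ 3 := by
  linear_combination (norm := noncomm_ring) d ^ 2 * h₀ + d * h₁ + d * h₀ * d + h₂ + h₀ * d ^ 2

theorem pow_three_mul_of_odd (h₀ : d * f = f₁ - f * d) (h₁ : d * f₁ = f₂ + f₁ * d)
    (h₂ : d * f₂ = f₃ - f₂ * d) : d ^ 3 * f = f₃ - f₂ * d + f₁ * d ^ 2 - f * d ^ 3 := by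
  linear_combination (norm := noncomm_ring) d ^ 2 * h₀ + d * h₁ - d * h₀ * d + h₂ + h₀ * d ^ 2

end SuperLeibniz

/-- `d` is the superderivative `D` (so `∂_x = d²`); `w0, …, w4` stand for
`W, DW, W_x, DW_x, W_xx` and `y0, …, y3` for `Υ, DΥ, Υ_x, DΥ_x`, as multiplication operators. -/
theorem ssk_factorization
    {A : Type*} [Ring A] [Algebra ℝ A]
    (d w0 w1 w2 w3 w4 y0 y1 y2 y3 : A)
    (hw0 : d * w0 = w1 + w0 * d) (hw1 : d * w1 = w2 - w1 * d)
    (hw2 : d * w2 = w3 + w2 * d) (hw3 : d * w3 = w4 - w3 * d)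
    (hy0 : d * y0 = y1 - y0 * d) (hy1 : d * y1 = y2 + y1 * d)
    (hy2 : d * y2 = y3 - y2 * d)
    (heven : ∀ a ∈ ({w0, w2, w4, y1, y3} : Set A),
      ∀ b ∈ ({w0, w1, w2, w3, w4, y0, y1, y2, y3} : Set A), a * b = b * a)
    (hodd : ∀ a ∈ ({w1, w3, y0, y2} : Set A),
      ∀ b ∈ ({w1, w3, y0, y2} : Set A), a * b = -(b * a)) :
    (d ^ 3 + w0 * d + y0) * (d ^ 3 - d * w0 + y0)
      = d ^ 6 + (-((2:ℝ) • w2) - w0 * w0 + y1) * d ^ 2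
        + (-y2 - (2:ℝ) • (y0 * w0)) * d
        + (2 : ℝ)⁻¹ •
            ((-((2:ℝ) • w4) - (2:ℝ) • (w0 * w2) + y3)
              - (-y3 - (2:ℝ) • (y1 * w0) + (2:ℝ) • (y0 * w1))) := by
  have : IsAddTorsionFree A := .of_isTorsionFree ℝ A
  have hy0y0 : y0 * y0 = 0 := self_eq_neg.mp (hodd y0 (by simp) y0 (by simp))
  have hw0y0 : w0 * y0 = y0 * w0 := heven w0 (by simp) y0 (by simp)
  have hy1w0 : y1 * w0 = w0 * y1 := heven y1 (by simp) w0 (by simp)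
  have h3w0 := pow_three_mul_of_even hw0 hw1 hw2
  have h3w1 := pow_three_mul_of_odd hw1 hw2 hw3
  have h3y0 := pow_three_mul_of_odd hy0 hy1 hy2
  have hhalf : (2 : ℝ)⁻¹ •
      ((-((2:ℝ) • w4) - (2:ℝ) • (w0 * w2) + y3)
        - (-y3 - (2:ℝ) • (y1 * w0) + (2:ℝ) • (y0 * w1)))
      = -w4 - w0 * w2 + y3 + y1 * w0 - y0 * w1 := by
    module
  rw [hhalf]
  simp only [two_smul]
  linear_combination (norm := noncomm_ring)
    -(d ^ 3 + w0 * d + y0) * hw0 - h3w1 - h3w0 * d + h3y0 - w0 * hw1 - w0 * hw0 * d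
      + w0 * hy0 - hy1w0 - hw0y0 * d + hy0y0
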